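/- arXiv:1412.4597 — 2 statements merged into one kernel-verified Lean document; each statement's English description precedes it below -/
import Mathlib

section
/- For an exponential random variable X with rate 1/2 (chi-square with 2 degrees of freedom), the inequality (1/(1−2t))·exp(−2t) ≤ exp(4t²) holds for all real t with |t| ≤ 1/4. -/
theorem mgf_centered_bound (t : ℝ) (ht : |t| ≤ 1/4) :
    (1 / (1 - 2*t)) * Real.exp (-2*t) ≤ Real.exp (4*t^2) := by
  obtain ⟨h1, h2⟩ := abs_le.mp ht
  have hpos : (0:ℝ) < 1 - 2*t := by linarith
  rw [div_mul_eq_mul_div, one_mul, div_le_iff₀ hpos]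
  have key : 1 ≤ Real.exp (4*t^2 + 2*t) * (1 - 2*t) := by
    rcases le_or_gt 0 t with h | h
    · have ha : (0:ℝ) ≤ 4*t^2 + 2*t := by nlinarith
      have := Real.quadratic_le_exp_of_nonneg ha
      nlinarith [this, sq_nonneg t, sq_nonneg (t*(1-4*t))]
    · have := Real.add_one_le_exp (4*t^2 + 2*t)
      nlinarith [this, sq_nonneg t]
  have heq : Real.exp (4*t^2 + 2*t) * Real.exp (-2*t) = Real.exp (4*t^2) := by
    rw [← Real.exp_add]; ring_nf
  nlinarith [key, Real.exp_pos (-2*t), heq]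
end

section
/- Let Θ ∈ ℂ^{m×n} satisfy RIP of order 2s with constant δ < 1, and let x be supported on T with |T| = s. Suppose z = Θx + n with ||n|| ≤ λ, and let T̂ ⊊ T' be any set with T ⊄ T̂ (there exists i ∈ T \ T̂) and |T̂ ∪ {i}| ≤ 2s. If |x(i)| > 2λ/√(1−δ) for all i ∈ T, then ||(I − Θ_{T̂} Θ_{T̂}^†) z|| > λ. -/
/-- Restricted isometry property of order `k` with constant `δ`. -/
def RIP {m n : ℕ} (Θ : Matrix (Fin m) (Fin n) ℂ) (k : ℕ) (δ : ℝ) : Prop :=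
  ∀ x : Fin n → ℂ, (Finset.univ.filter (fun i => x i ≠ 0)).card ≤ k →
    (1 - δ) * (∑ i, ‖x i‖^2) ≤ (∑ r, ‖Θ.mulVec x r‖^2) ∧
    (∑ r, ‖Θ.mulVec x r‖^2) ≤ (1 + δ) * (∑ i, ‖x i‖^2)

/-- Column submatrix indexed by a finset `T`. -/
def colSub {m n : ℕ} (Θ : Matrix (Fin m) (Fin n) ℂ) (T : Finset (Fin n)) :
    Matrix (Fin m) T ℂ :=
  Θ.submatrix id Subtype.val

/-- Moore–Penrose pseudoinverse `(ΘᵀΘ)⁻¹Θᵀ` of a full-column-rank matrix. -/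
noncomputable def pinv {m n : ℕ} (Θ : Matrix (Fin m) (Fin n) ℂ) (T : Finset (Fin n)) :
    Matrix T (Fin m) ℂ :=
  ((colSub Θ T).conjTranspose * colSub Θ T)⁻¹ * (colSub Θ T).conjTranspose

/-! Whatever the coefficient vector `u` on `T̂`, the vector `Θx - Θ_{T̂} u` is `Θ w` for some
`w` supported on `T̂ ∪ T` with `w i = x i`, so the lower RIP bound puts it at distance at least
`√(1 - δ) |x i|` from the column span of `Θ_{T̂}`; the pseudoinverse only picks one such `u`.
The noise moves the residual by at most `λ`, and `√(1 - δ) |x i| > 2λ`. -/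

open Matrix Finset

theorem sqrt_sum_norm_sq_sub_sqrt_sum_norm_sq_le {𝕜 ι : Type*} [RCLike 𝕜] [Fintype ι]
    (a b : ι → 𝕜) :
    √(∑ r, ‖a r‖ ^ 2) - √(∑ r, ‖b r‖ ^ 2) ≤ √(∑ r, ‖(a + b) r‖ ^ 2) := by
  have h := norm_le_add_norm_add (WithLp.toLp 2 a : EuclideanSpace 𝕜 ι) (WithLp.toLp 2 b)
  simp only [← WithLp.toLp_add, EuclideanSpace.norm_eq] at h
  linarith

def extendByZero {ι R : Type*} [DecidableEq ι] [Zero R] (S : Finset ι) (v : S → R) : ι → R :=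
  fun j => if h : j ∈ S then v ⟨j, h⟩ else 0

section
variable {m n : ℕ}

theorem colSub_mulVec (Θ : Matrix (Fin m) (Fin n) ℂ) (S : Finset (Fin n)) (v : S → ℂ) :
    colSub Θ S *ᵥ v = Θ *ᵥ extendByZero S v := by
  ext r
  calc ∑ j : S, Θ r j * v j = ∑ j : S, Θ r j * extendByZero S v j := by simp [extendByZero]
    _ = ∑ j ∈ S, Θ r j * extendByZero S v j :=
      sum_coe_sort S fun j => Θ r j * extendByZero S v j
    _ = ∑ j, Θ r j * extendByZero S v j :=
      sum_subset (subset_univ S) fun j _ hj => by simp [extendByZero, hj]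

theorem RIP.lower_of_support_subset {Θ : Matrix (Fin m) (Fin n) ℂ} {k : ℕ} {δ : ℝ}
    (hRIP : RIP Θ k δ) {S : Finset (Fin n)} (hS : S.card ≤ k) {w : Fin n → ℂ}
    (hw : ∀ j ∉ S, w j = 0) :
    (1 - δ) * ∑ j, ‖w j‖ ^ 2 ≤ ∑ r, ‖(Θ *ᵥ w) r‖ ^ 2 := by
  refine (hRIP w (le_trans (card_le_card fun j hj => ?_) hS)).1
  by_contra hjS
  exact (mem_filter.1 hj).2 (hw j hjS)

theorem RIP.one_sub_mul_sq_norm_le_residual {Θ : Matrix (Fin m) (Fin n) ℂ} {k : ℕ} {δ : ℝ}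
    (hRIP : RIP Θ k δ) {T S : Finset (Fin n)} (hcard : (S ∪ T).card ≤ k) {x : Fin n → ℂ}
    (hsupp : ∀ j ∉ T, x j = 0) {i : Fin n} (hiS : i ∉ S) (u : S → ℂ) :
    (1 - δ) * ‖x i‖ ^ 2 ≤ ∑ r, ‖(Θ *ᵥ x - colSub Θ S *ᵥ u) r‖ ^ 2 := by
  set w := x - extendByZero S u
  have hwsupp : ∀ j ∉ S ∪ T, w j = 0 := fun j hj => by
    rw [mem_union, not_or] at hj
    simp [w, extendByZero, hj.1, hsupp j hj.2]
  have hwi : w i = x i := by simp [w, extendByZero, hiS]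
  have hx : ‖x i‖ ^ 2 ≤ ∑ j, ‖w j‖ ^ 2 :=
    hwi ▸ single_le_sum (fun j _ => sq_nonneg ‖w j‖) (mem_univ i)
  have hΘw : Θ *ᵥ x - colSub Θ S *ᵥ u = Θ *ᵥ w := by
    rw [colSub_mulVec, ← mulVec_sub]
  rw [hΘw]
  rcases le_total 0 (1 - δ) with hδ | hδ
  · exact (mul_le_mul_of_nonneg_left hx hδ).trans (hRIP.lower_of_support_subset hcard hwsupp)
  · exact (mul_nonpos_of_nonpos_of_nonneg hδ (sq_nonneg _)).trans
      (sum_nonneg fun r _ => sq_nonneg _)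

end

theorem residual_exceeds_threshold_general (m n s : ℕ) (δ lam : ℝ) (hδ : δ < 1)
    (Θ : Matrix (Fin m) (Fin n) ℂ) (hRIP : RIP Θ (2*s) δ)
    (T : Finset (Fin n))
    (x : Fin n → ℂ) (hsupp : ∀ j, j ∉ T → x j = 0)
    (nv z : Fin m → ℂ) (hz : z = Θ.mulVec x + nv)
    (hn : Real.sqrt (∑ r, ‖nv r‖^2) ≤ lam)
    (That : Finset (Fin n))
    (hi : ∃ i ∈ T, i ∉ That ∧ (insert i That).card ≤ 2*s)
    (hcard : (That ∪ T).card ≤ 2*s)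
    (hbig : ∀ i ∈ T, 2 * lam / Real.sqrt (1 - δ) < ‖x i‖) :
    lam < Real.sqrt (∑ r, ‖(z - (colSub Θ That).mulVec ((pinv Θ That).mulVec z)) r‖^2) := by
  obtain ⟨i, hiT, hiThat, -⟩ := hi
  set u := pinv Θ That *ᵥ z
  have hsignal : √(1 - δ) * ‖x i‖ ≤ √(∑ r, ‖(Θ *ᵥ x - colSub Θ That *ᵥ u) r‖ ^ 2) := by
    rw [← Real.sqrt_sq (norm_nonneg (x i)), ← Real.sqrt_mul (by linarith)]
    exact Real.sqrt_le_sqrt (hRIP.one_sub_mul_sq_norm_le_residual hcard hsupp hiThat u)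
  have hthreshold : 2 * lam < √(1 - δ) * ‖x i‖ :=
    (div_lt_iff₀' (Real.sqrt_pos.2 (by linarith))).1 (hbig i hiT)
  have hresidual : z - colSub Θ That *ᵥ u = (Θ *ᵥ x - colSub Θ That *ᵥ u) + nv := by
    rw [hz]; abel
  rw [hresidual]
  linarith [sqrt_sum_norm_sq_sub_sqrt_sum_norm_sq_le (Θ *ᵥ x - colSub Θ That *ᵥ u) nv]

theorem residual_exceeds_threshold (m n s : ℕ) (δ lam : ℝ) (hδ0 : 0 ≤ δ) (hδ : δ < 1)
    (hlam : 0 ≤ lam)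
    (Θ : Matrix (Fin m) (Fin n) ℂ) (hRIP : RIP Θ (2*s) δ)
    (T : Finset (Fin n)) (hT : T.card = s)
    (x : Fin n → ℂ) (hsupp : ∀ j, j ∉ T → x j = 0)
    (nv z : Fin m → ℂ) (hz : z = Θ.mulVec x + nv)
    (hn : Real.sqrt (∑ r, ‖nv r‖^2) ≤ lam)
    (That : Finset (Fin n))
    (hi : ∃ i ∈ T, i ∉ That ∧ (insert i That).card ≤ 2*s)
    (hcard : (That ∪ T).card ≤ 2*s)
    (hbig : ∀ i ∈ T, 2 * lam / Real.sqrt (1 - δ) < ‖x i‖) :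
    lam < Real.sqrt (∑ r, ‖(z - (colSub Θ That).mulVec ((pinv Θ That).mulVec z)) r‖^2) :=
  residual_exceeds_threshold_general m n s δ lam hδ Θ hRIP T x hsupp nv z hz hn That hi hcard hbig
end
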